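/- arXiv:1008.2109 — 8 statements merged into one kernel-verified Lean document; each statement's English description precedes it below -/
import Mathlib

section
/- Let (S, →) be a labelled transition system over Act, let f : S → S be a unary operation on states, and suppose there is a function cut_f : HML(Act) → HML(Act) satisfying condition CUT: for every state p and formula φ, f(p) ⊨ φ if and only if p ⊨ cut_f(φ). Then for every language O ⊆ HML(Act) satisfying: φ ∈ O implies (cut_f(φ) ∈ O^≡ or cut_f(φ) ≡ F), the equivalence ~_O is a congruence with respect to f: if p ~_O q then f(p) ~_O f(q). -/
/-- Hennessy–Milner logic formulas over a set `Act` of actions. -/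
inductive HML (Act : Type) : Type 1 where
  | tt : HML Act
  | conj {I : Type} (φ : I → HML Act) : HML Act
  | diam (a : Act) (φ : HML Act) : HML Act
  | neg (φ : HML Act) : HML Act

/-- Satisfaction of an HML formula in an LTS `(S, Tr)`. -/
def Sat {Act S : Type} (Tr : S → Act → S → Prop) : S → HML Act → Prop
  | _, .tt => True
  | p, .conj φ => ∀ i, Sat Tr p (φ i)
  | p, .diam a φ => ∃ p', Tr p a p' ∧ Sat Tr p' φ
  | p, .neg φ => ¬ Sat Tr p φ

/-- `O`-equivalence of states. -/
def OEquiv {Act S : Type} (Tr : S → Act → S → Prop) (O : Set (HML Act)) (p q : S) : Prop :=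
  ∀ φ ∈ O, (Sat Tr p φ ↔ Sat Tr q φ)

/-- Semantic equivalence of formulas: same satisfaction in every LTS. -/
def SemEq {Act : Type} (φ φ' : HML Act) : Prop :=
  ∀ (S : Type) (Tr : S → Act → S → Prop) (p : S), Sat Tr p φ ↔ Sat Tr p φ'

/-- `O^≡`: formulas semantically equivalent to some formula of `O`. -/
def closEq {Act : Type} (O : Set (HML Act)) : Set (HML Act) :=
  { φ | ∃ φ' ∈ O, SemEq φ φ' }

theorem cut_congruence {Act S : Type}
    (Tr : S → Act → S → Prop) (f : S → S)
    (cutf : HML Act → HML Act)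
    (hCUT : ∀ (p : S) (φ : HML Act), Sat Tr (f p) φ ↔ Sat Tr p (cutf φ))
    (O : Set (HML Act))
    (hO : ∀ φ ∈ O, cutf φ ∈ closEq O ∨ SemEq (cutf φ) (HML.neg HML.tt))
    (p q : S) (h : OEquiv Tr O p q) :
    OEquiv Tr O (f p) (f q) := by
  intro φ hφ
  rw [hCUT p φ, hCUT q φ]
  rcases hO φ hφ with ⟨ψ, hψO, hsem⟩ | hF
  · rw [hsem S Tr p, hsem S Tr q]; exact h ψ hψO
  · rw [hF S Tr p, hF S Tr q]; simp [Sat]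
end

section
/- Let (S, →) be a labelled transition system over Act equipped with projection operations π : ℕ → S → S satisfying: π_{n+1}(p) →a q if and only if there exists p' with p →a p' and q = π_n(p'), and π_0(p) has no outgoing transitions. Define cut_n : HML(Act) → HML(Act) by: cut_n(T) = T; cut_n(⋀_{i∈I} φ_i) = ⋀_{i∈I} cut_n(φ_i); cut_n(¬φ) = ¬cut_n(φ); cut_0(⟨a⟩φ) = F; cut_{n+1}(⟨a⟩φ) = ⟨a⟩cut_n(φ). Then for every n ∈ ℕ, every state p and every formula φ: π_n(p) ⊨ φ if and only if p ⊨ cut_n(φ). -/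
/-- The cutting function for the projection operators. -/
def cutProj {Act : Type} : ℕ → HML Act → HML Act
  | _, .tt => .tt
  | n, .conj φ => .conj (fun i => cutProj n (φ i))
  | n, .neg φ => .neg (cutProj n φ)
  | 0, .diam _ _ => .neg .tt
  | n + 1, .diam a φ => .diam a (cutProj n φ)

theorem cutProj_correct {Act S : Type}
    (Tr : S → Act → S → Prop) (π : ℕ → S → S)
    (hπ : ∀ n p a q, Tr (π (n + 1) p) a q ↔ ∃ p', Tr p a p' ∧ q = π n p')
    (hπ0 : ∀ p a q, ¬ Tr (π 0 p) a q) :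
    ∀ (n : ℕ) (p : S) (φ : HML Act), Sat Tr (π n p) φ ↔ Sat Tr p (cutProj n φ) := by
  intro n p φ
  induction φ generalizing n p with
  | tt => simp [Sat, cutProj]
  | conj φ ih => simp only [Sat, cutProj]; exact forall_congr' fun i => ih i n p
  | diam a φ ih =>
    cases n with
    | zero =>
      simp only [Sat, cutProj]
      constructor
      · rintro ⟨q, hq, _⟩; exact absurd hq (hπ0 p a q)
      · intro h; exact absurd trivial h
    | succ n =>
      simp only [Sat, cutProj]
      constructor
      · rintro ⟨q, hq, hsat⟩
        obtain ⟨p', hp', rfl⟩ := (hπ n p a q).mp hq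
        exact ⟨p', hp', (ih n p').mp hsat⟩
      · rintro ⟨p', hp', hsat⟩
        exact ⟨π n p', (hπ n p a _).mpr ⟨p', hp', rfl⟩, (ih n p').mpr hsat⟩
  | neg φ ih => simp only [Sat, cutProj]; exact not_congr (ih n p)
end

section
/- Let B ⊆ Act and let (S, →) be a labelled transition system over Act equipped with an encapsulation operation ∂_B : S → S satisfying: ∂_B(p) →a q if and only if a ∉ B and there exists p' with p →a p' and q = ∂_B(p'). Define cut_B : HML(Act) → HML(Act) by: cut_B(T) = T; cut_B(⋀_{i∈I} φ_i) = ⋀_{i∈I} cut_B(φ_i); cut_B(¬φ) = ¬cut_B(φ); cut_B(⟨a⟩φ) = F if a ∈ B; cut_B(⟨a⟩φ) = ⟨a⟩cut_B(φ) if a ∉ B. Then for every state p and every formula φ: ∂_B(p) ⊨ φ if and only if p ⊨ cut_B(φ). -/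
open Classical in
/-- The cutting function for the encapsulation operators. -/
noncomputable def cutEncap {Act : Type} (B : Set Act) : HML Act → HML Act
  | .tt => .tt
  | .conj φ => .conj (fun i => cutEncap B (φ i))
  | .neg φ => .neg (cutEncap B φ)
  | .diam a φ => if a ∈ B then .neg .tt else .diam a (cutEncap B φ)

theorem cutEncap_correct {Act S : Type} (B : Set Act)
    (Tr : S → Act → S → Prop) (d : S → S)
    (hd : ∀ p a q, Tr (d p) a q ↔ a ∉ B ∧ ∃ p', Tr p a p' ∧ q = d p') :
    ∀ (p : S) (φ : HML Act), Sat Tr (d p) φ ↔ Sat Tr p (cutEncap B φ) := by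
  intro p φ
  induction φ generalizing p with
  | tt => simp [Sat, cutEncap]
  | conj φ ih =>
    simp only [Sat, cutEncap]
    exact forall_congr' fun i => ih i p
  | neg φ ih =>
    simp only [Sat, cutEncap]
    exact not_congr (ih p)
  | diam a φ ih =>
    by_cases h : a ∈ B
    · simp only [cutEncap, if_pos h, Sat]
      constructor
      · rintro ⟨q, hq, -⟩
        exact (((hd p a q).mp hq).1 h).elim
      · intro hn; exact (hn trivial).elim
    · simp only [cutEncap, if_neg h, Sat]
      constructor
      · rintro ⟨q, hq, hs⟩
        obtain ⟨-, p', hp', rfl⟩ := (hd p a q).mp hq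
        exact ⟨p', hp', (ih p').mp hs⟩
      · rintro ⟨p', hp', hs⟩
        exact ⟨d p', (hd p a (d p')).mpr ⟨h, p', hp', rfl⟩, (ih p').mpr hs⟩
end

section
/- Let a ∈ Act and let O = { ¬⟨a⟩¬⟨a⟩T } ⊆ HML(Act). In the BCCSP LTS over Act: a.a.0 ~_O 0, but not π₁(a.a.0) ~_O π₁(0). Hence ~_O is not a congruence with respect to the projection operator π₁. -/
/-- BCCSP processes. -/
inductive BCCSP (Act : Type) : Type where
  | nil : BCCSP Act
  | pre (a : Act) (p : BCCSP Act) : BCCSP Act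
  | plus (p q : BCCSP Act) : BCCSP Act

/-- The transition relation of the BCCSP LTS. -/
inductive BTrans {Act : Type} : BCCSP Act → Act → BCCSP Act → Prop where
  | pre (a : Act) (p : BCCSP Act) : BTrans (.pre a p) a p
  | plusL {p : BCCSP Act} {a : Act} {r : BCCSP Act} (q : BCCSP Act) :
      BTrans p a r → BTrans (.plus p q) a r
  | plusR {q : BCCSP Act} {a : Act} {r : BCCSP Act} (p : BCCSP Act) :
      BTrans q a r → BTrans (.plus p q) a r

/-- Binary conjunction of HML formulas. -/
def HML.and {Act : Type} (φ ψ : HML Act) : HML Act :=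
  HML.conj (fun b : Bool => bif b then φ else ψ)

/-- Projection operators on BCCSP processes. -/
def BCCSP.proj {Act : Type} : ℕ → BCCSP Act → BCCSP Act
  | 0, _ => .nil
  | _ + 1, .nil => .nil
  | n + 1, .pre a p => .pre a (BCCSP.proj n p)
  | n + 1, .plus p q => .plus (BCCSP.proj (n + 1) p) (BCCSP.proj (n + 1) q)

theorem projection_counterexample {Act : Type} (a : Act) :
    OEquiv BTrans {HML.neg (HML.diam a (HML.neg (HML.diam a HML.tt)))}
      (BCCSP.pre a (BCCSP.pre a BCCSP.nil)) BCCSP.nil ∧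
    ¬ OEquiv BTrans {HML.neg (HML.diam a (HML.neg (HML.diam a HML.tt)))}
      (BCCSP.proj 1 (BCCSP.pre a (BCCSP.pre a BCCSP.nil))) (BCCSP.proj 1 BCCSP.nil) := by
  constructor
  · intro φ hφ
    simp only [Set.mem_singleton_iff] at hφ
    subst hφ
    simp only [Sat]
    constructor
    · intro _ h
      obtain ⟨p', hp', _⟩ := h
      cases hp'
    · intro _ h
      obtain ⟨p', hp', hs⟩ := h
      cases hp'
      exact hs ⟨BCCSP.nil, BTrans.pre a BCCSP.nil, trivial⟩
  · intro h
    have := h _ (Set.mem_singleton _)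
    simp only [Sat, BCCSP.proj] at this
    apply this.mpr
    · intro ⟨p', hp', _⟩; cases hp'
    · exact ⟨BCCSP.nil, BTrans.pre a BCCSP.nil, fun ⟨p', hp', _⟩ => by cases hp'⟩
end

section
/- Let a, b ∈ Act with a ≠ b, and let O = { ⟨a⟩¬⟨b⟩T } ⊆ HML(Act). In the BCCSP LTS over Act: a.b.0 ~_O 0, but not ∂_{{b}}(a.b.0) ~_O ∂_{{b}}(0). Hence ~_O is not a congruence with respect to the encapsulation operator ∂_{{b}}. -/
open Classical in
/-- Encapsulation operators on BCCSP processes. -/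
noncomputable def BCCSP.encap {Act : Type} (B : Set Act) : BCCSP Act → BCCSP Act
  | .nil => .nil
  | .pre a p => if a ∈ B then .nil else .pre a (BCCSP.encap B p)
  | .plus p q => .plus (BCCSP.encap B p) (BCCSP.encap B q)

theorem encapsulation_counterexample {Act : Type} (a b : Act) (hab : a ≠ b) :
    OEquiv BTrans {HML.diam a (HML.neg (HML.diam b HML.tt))}
      (BCCSP.pre a (BCCSP.pre b BCCSP.nil)) BCCSP.nil ∧
    ¬ OEquiv BTrans {HML.diam a (HML.neg (HML.diam b HML.tt))}
      (BCCSP.encap {b} (BCCSP.pre a (BCCSP.pre b BCCSP.nil)))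
      (BCCSP.encap {b} BCCSP.nil) := by
  constructor
  · intro φ hφ
    rcases hφ with rfl
    constructor
    · rintro ⟨p', hp', hsat⟩
      cases hp'
      exact absurd ⟨BCCSP.nil, BTrans.pre b BCCSP.nil, trivial⟩ hsat
    · rintro ⟨p', hp', -⟩
      cases hp'
  · intro h
    have := (h _ rfl).mp
    simp only [BCCSP.encap, if_neg (show ¬ a ∈ ({b} : Set Act) from hab),
      if_pos (show b ∈ ({b} : Set Act) from rfl)] at this
    have hsat : Sat BTrans (BCCSP.pre a BCCSP.nil)
        (HML.diam a (HML.neg (HML.diam b HML.tt))) := by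
      refine ⟨BCCSP.nil, BTrans.pre a BCCSP.nil, ?_⟩
      rintro ⟨p', hp', -⟩
      cases hp'
    rcases this hsat with ⟨p', hp', -⟩
    cases hp'
end

section
/- Let a, b ∈ Act with a ≠ b, and let O = { ⟨a⟩T, ⟨b⟩T, ⟨a⟩⟨b⟩T, ⟨a⟩⟨b⟩⟨a⟩T, ⟨b⟩⟨a⟩T } ⊆ HML(Act). In the BCCSP LTS extended with parallel composition ||: a.a.0 ~_O a.0, but a.a.0 || b.0 ⊨ ⟨a⟩⟨b⟩⟨a⟩T while a.0 || b.0 does not satisfy ⟨a⟩⟨b⟩⟨a⟩T; hence not (a.a.0 || b.0) ~_O (a.0 || b.0), so ~_O is not a congruence with respect to ||. -/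
/-- Terms built from BCCSP processes and a binary parallel operator. -/
inductive PTerm (Act : Type) : Type where
  | proc (p : BCCSP Act) : PTerm Act
  | par (p q : PTerm Act) : PTerm Act

/-- The transition relation of the BCCSP LTS extended with parallel composition. -/
inductive PTrans {Act : Type} : PTerm Act → Act → PTerm Act → Prop where
  | proc {p : BCCSP Act} {a : Act} {p' : BCCSP Act} :
      BTrans p a p' → PTrans (.proc p) a (.proc p')
  | parL {p : PTerm Act} {a : Act} {p' : PTerm Act} (q : PTerm Act) :
      PTrans p a p' → PTrans (.par p q) a (.par p' q)
  | parR {q : PTerm Act} {a : Act} {q' : PTerm Act} (p : PTerm Act) :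
      PTrans q a q' → PTrans (.par p q) a (.par p q')

lemma ptrans_nil {Act : Type} {c : Act} {r : PTerm Act} :
    ¬ PTrans (.proc .nil) c r := by
  intro h; cases h with | proc h => cases h

lemma ptrans_pre {Act : Type} {a c : Act} {p : BCCSP Act} {r : PTerm Act} :
    PTrans (.proc (.pre a p)) c r ↔ c = a ∧ r = .proc p := by
  constructor
  · intro h; cases h with | proc h => cases h; exact ⟨rfl, rfl⟩
  · rintro ⟨rfl, rfl⟩; exact PTrans.proc (BTrans.pre _ _)

lemma sat_tt {Act S : Type} {Tr : S → Act → S → Prop} {p : S} :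
    Sat Tr p HML.tt ↔ True := Iff.rfl

lemma sat_nil_diam {Act : Type} {c : Act} {φ : HML Act} :
    ¬ Sat PTrans (.proc (.nil)) (.diam c φ) := by
  rintro ⟨r, hr, -⟩; exact ptrans_nil hr

lemma sat_pre_diam {Act : Type} {a c : Act} {p : BCCSP Act} {φ : HML Act} :
    Sat PTrans (.proc (.pre a p)) (.diam c φ) ↔ c = a ∧ Sat PTrans (.proc p) φ := by
  constructor
  · rintro ⟨r, hr, hs⟩
    obtain ⟨rfl, rfl⟩ := ptrans_pre.mp hr
    exact ⟨rfl, hs⟩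
  · rintro ⟨rfl, hs⟩
    exact ⟨_, ptrans_pre.mpr ⟨rfl, rfl⟩, hs⟩

theorem parallel_trace_counterexample {Act : Type} (a b : Act) (hab : a ≠ b) :
    OEquiv PTrans
      ({HML.diam a HML.tt, HML.diam b HML.tt, HML.diam a (HML.diam b HML.tt),
        HML.diam a (HML.diam b (HML.diam a HML.tt)), HML.diam b (HML.diam a HML.tt)} :
        Set (HML Act))
      (PTerm.proc (BCCSP.pre a (BCCSP.pre a BCCSP.nil)))
      (PTerm.proc (BCCSP.pre a BCCSP.nil)) ∧
    Sat PTrans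
      (PTerm.par (PTerm.proc (BCCSP.pre a (BCCSP.pre a BCCSP.nil)))
        (PTerm.proc (BCCSP.pre b BCCSP.nil)))
      (HML.diam a (HML.diam b (HML.diam a HML.tt))) ∧
    ¬ Sat PTrans
      (PTerm.par (PTerm.proc (BCCSP.pre a BCCSP.nil))
        (PTerm.proc (BCCSP.pre b BCCSP.nil)))
      (HML.diam a (HML.diam b (HML.diam a HML.tt))) ∧
    ¬ OEquiv PTrans
      ({HML.diam a HML.tt, HML.diam b HML.tt, HML.diam a (HML.diam b HML.tt),
        HML.diam a (HML.diam b (HML.diam a HML.tt)), HML.diam b (HML.diam a HML.tt)} :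
        Set (HML Act))
      (PTerm.par (PTerm.proc (BCCSP.pre a (BCCSP.pre a BCCSP.nil)))
        (PTerm.proc (BCCSP.pre b BCCSP.nil)))
      (PTerm.par (PTerm.proc (BCCSP.pre a BCCSP.nil))
        (PTerm.proc (BCCSP.pre b BCCSP.nil))) := by
  have hba : b ≠ a := hab.symm
  have hsat : Sat PTrans
      (PTerm.par (PTerm.proc (BCCSP.pre a (BCCSP.pre a BCCSP.nil)))
        (PTerm.proc (BCCSP.pre b BCCSP.nil)))
      (HML.diam a (HML.diam b (HML.diam a HML.tt))) :=
    ⟨_, .parL _ (.proc (.pre a _)), _, .parR _ (.proc (.pre b _)),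
      _, .parL _ (.proc (.pre a _)), trivial⟩
  have hnsat : ¬ Sat PTrans
      (PTerm.par (PTerm.proc (BCCSP.pre a BCCSP.nil))
        (PTerm.proc (BCCSP.pre b BCCSP.nil)))
      (HML.diam a (HML.diam b (HML.diam a HML.tt))) := by
    rintro ⟨r1, h1, r2, h2, r3, h3, -⟩
    cases h1 with
    | parL _ h =>
      obtain ⟨-, rfl⟩ := ptrans_pre.mp h
      cases h2 with
      | parL _ h => exact ptrans_nil h
      | parR _ h =>
        obtain ⟨-, rfl⟩ := ptrans_pre.mp h
        cases h3 with
        | parL _ h => exact ptrans_nil h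
        | parR _ h => exact ptrans_nil h
    | parR _ h =>
      obtain ⟨heq, -⟩ := ptrans_pre.mp h
      exact hab heq
  refine ⟨?_, hsat, hnsat, ?_⟩
  · intro φ hφ
    simp only [Set.mem_insert_iff, Set.mem_singleton_iff] at hφ
    rcases hφ with rfl | rfl | rfl | rfl | rfl <;>
      simp [sat_pre_diam, sat_nil_diam, sat_tt, hba]
  · intro h
    have h4 := h (HML.diam a (HML.diam b (HML.diam a HML.tt))) (by simp)
    exact hnsat (h4.mp hsat)
end

section
/- Let (S, →) be a labelled transition system over Act equipped with a binary operation + on S such that for all states p, q, r and actions a: p+q →a r if and only if (p →a r or q →a r). Let O_CT be the completed trace observation language over Act. Then completed trace equivalence ~_{O_CT} is a congruence with respect to +: if p₁ ~_{O_CT} q₁ and p₂ ~_{O_CT} q₂, then p₁+p₂ ~_{O_CT} q₁+q₂. -/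
/-- The completed trace observation language `O_CT`. -/
inductive OCT (Act : Type) : HML Act → Prop where
  | tt : OCT Act HML.tt
  | diam (a : Act) {φ : HML Act} : OCT Act φ → OCT Act (HML.diam a φ)
  | deadlock : OCT Act (HML.conj (fun a : Act => HML.neg (HML.diam a HML.tt)))

theorem completed_trace_alternative_composition_congruence {Act S : Type}
    (Tr : S → Act → S → Prop) (plus : S → S → S)
    (hplus : ∀ p q a r, Tr (plus p q) a r ↔ (Tr p a r ∨ Tr q a r))
    (p₁ p₂ q₁ q₂ : S)
    (h1 : OEquiv Tr {φ | OCT Act φ} p₁ q₁) (h2 : OEquiv Tr {φ | OCT Act φ} p₂ q₂) :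
    OEquiv Tr {φ | OCT Act φ} (plus p₁ p₂) (plus q₁ q₂) := by
  intro φ hφ
  cases hφ with
  | tt => simp [Sat]
  | @diam a ψ hψ =>
    have key : ∀ x y : S, Sat Tr (plus x y) (HML.diam a ψ) ↔
        (Sat Tr x (HML.diam a ψ) ∨ Sat Tr y (HML.diam a ψ)) := by
      intro x y
      constructor
      · rintro ⟨p', hp', hs⟩
        rcases (hplus x y a p').mp hp' with h | h
        · exact Or.inl ⟨p', h, hs⟩
        · exact Or.inr ⟨p', h, hs⟩
      · rintro (⟨p', hp', hs⟩ | ⟨p', hp', hs⟩)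
        · exact ⟨p', (hplus x y a p').mpr (Or.inl hp'), hs⟩
        · exact ⟨p', (hplus x y a p').mpr (Or.inr hp'), hs⟩
    rw [key, key, h1 _ (OCT.diam a hψ), h2 _ (OCT.diam a hψ)]
  | deadlock =>
    have key : ∀ x y : S,
        Sat Tr (plus x y) (HML.conj fun a : Act => HML.neg (HML.diam a HML.tt)) ↔
        (Sat Tr x (HML.conj fun a : Act => HML.neg (HML.diam a HML.tt)) ∧
         Sat Tr y (HML.conj fun a : Act => HML.neg (HML.diam a HML.tt))) := by
      intro x y
      simp only [Sat, hplus]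
      constructor
      · intro h
        exact ⟨fun a ⟨p', hp', _⟩ => h a ⟨p', Or.inl hp', trivial⟩,
               fun a ⟨p', hp', _⟩ => h a ⟨p', Or.inr hp', trivial⟩⟩
      · rintro ⟨hx, hy⟩ a ⟨p', hp' | hp', _⟩
        · exact hx a ⟨p', hp', trivial⟩
        · exact hy a ⟨p', hp', trivial⟩
    rw [key, key, h1 _ OCT.deadlock, h2 _ OCT.deadlock]
end

section
/- Let O_T be the trace observation language over Act: the smallest set of formulas with T ∈ O_T and ⟨a⟩φ ∈ O_T whenever φ ∈ O_T and a ∈ Act. Then O_T satisfies condition RES (for every context C'[] and formula ψ, C'[¬ψ] ∈ O_T implies C'[T] ∈ O_T^≡), and consequently, in every labelled transition system over Act equipped, for B ⊆ Act, with an encapsulation operation ∂_B : S → S satisfying ∂_B(p) →a q iff a ∉ B and there exists p' with p →a p' and q = ∂_B(p'), trace equivalence ~_{O_T} is a congruence with respect to ∂_B: if p ~_{O_T} q then ∂_B(p) ~_{O_T} ∂_B(q). -/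
/-- Contexts: HML formulas with one occurrence of a hole. -/
inductive Ctx (Act : Type) : Type 1 where
  | hole : Ctx Act
  | neg (C : Ctx Act) : Ctx Act
  | diam (a : Act) (C : Ctx Act) : Ctx Act
  | conj {I : Type} (C : Ctx Act) (φ : I → HML Act) : Ctx Act

/-- Filling the hole of a context with a formula.  In the conjunction case the
filled context is one conjunct among the formulas `φ i`. -/
def Ctx.fill {Act : Type} : Ctx Act → HML Act → HML Act
  | .hole, ψ => ψ
  | .neg C, ψ => .neg (C.fill ψ)
  | .diam a C, ψ => .diam a (C.fill ψ)
  | .conj C φ, ψ => .conj (fun o => Option.elim o (C.fill ψ) φ)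

/-- The trace observation language `O_T`. -/
inductive OT (Act : Type) : HML Act → Prop where
  | tt : OT Act HML.tt
  | diam (a : Act) {φ : HML Act} : OT Act φ → OT Act (HML.diam a φ)


lemma fill_neg_not_OT {Act : Type} (C : Ctx Act) (ψ : HML Act) :
    ¬ OT Act (C.fill (HML.neg ψ)) := by
  induction C with
  | hole => intro h; cases h
  | neg C ih => intro h; cases h
  | diam a C ih => intro h; cases h; exact ih (by assumption)
  | conj C φ => intro h; cases h

/-- All actions in a formula avoid `B` (only meaningful on OT formulas). -/
def AvoidB {Act : Type} (B : Set Act) : HML Act → Prop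
  | .tt => True
  | .diam a φ => a ∉ B ∧ AvoidB B φ
  | .conj _ => True
  | .neg _ => True

lemma sat_d {Act S : Type} (Tr : S → Act → S → Prop) (B : Set Act) (d : S → S)
    (hd : ∀ p a q, Tr (d p) a q ↔ a ∉ B ∧ ∃ p', Tr p a p' ∧ q = d p')
    {φ : HML Act} (hφ : OT Act φ) :
    ∀ p, Sat Tr (d p) φ ↔ (AvoidB B φ ∧ Sat Tr p φ) := by
  induction hφ with
  | tt => intro p; simp [Sat, AvoidB]
  | diam a hψ ih =>
    intro p
    constructor
    · rintro ⟨r, hr, hs⟩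
      obtain ⟨ha, p', hp', rfl⟩ := (hd p a r).mp hr
      obtain ⟨hav, hsat⟩ := (ih p').mp hs
      exact ⟨⟨ha, hav⟩, p', hp', hsat⟩
    · rintro ⟨⟨ha, hav⟩, p', hp', hsat⟩
      exact ⟨d p', (hd p a (d p')).mpr ⟨ha, p', hp', rfl⟩, (ih p').mpr ⟨hav, hsat⟩⟩

theorem trace_res_and_encapsulation_congruence {Act : Type} :
    (∀ (C : Ctx Act) (ψ : HML Act),
      C.fill (HML.neg ψ) ∈ {φ | OT Act φ} → C.fill HML.tt ∈ closEq {φ | OT Act φ}) ∧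
    (∀ (S : Type) (Tr : S → Act → S → Prop) (B : Set Act) (d : S → S),
      (∀ p a q, Tr (d p) a q ↔ a ∉ B ∧ ∃ p', Tr p a p' ∧ q = d p') →
      ∀ p q : S, OEquiv Tr {φ | OT Act φ} p q → OEquiv Tr {φ | OT Act φ} (d p) (d q)) := by
  constructor
  · intro C ψ h
    exact absurd h (fill_neg_not_OT C ψ)
  · intro S Tr B d hd p q hpq φ hφ
    rw [sat_d Tr B d hd hφ p, sat_d Tr B d hd hφ q, hpq φ hφ]
end
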